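/- arXiv:1606.07589 — 2 statements merged into one kernel-verified Lean document; each statement's English description precedes it below -/
import Mathlib

section
/- Let G be a group in which every element has order dividing 4 and suppose g, h ∈ G satisfy g⁴ = 1, h² = 1, (h, g²) = 1 and (gh)⁴ = 1 with (gh)² = (hg)² ≠ 1. Then the subgroup ⟨g, h⟩ has order dividing 16. -/
/-!
Since `(gh)² = (hg)²`, the element `z = (gh)²` commutes with `g` and `h`, and together with
`g⁴ = h² = 1` it gives `h g h⁻¹ = g³ z`. Hence every element of `⟨g, h⟩` can be written as
`gⁱ zᵉ hᵇ` with `i < 4` and `e, b < 2`, so `⟨g, h⟩` has at most 16 elements. Being a `2`-group,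
its order is a power of `2`, hence divides `16`.
-/

theorem IsPGroup.card_dvd_of_card_le {p n : ℕ} [Fact p.Prime] {G : Type*} [Group G] [Finite G]
    (hG : IsPGroup p G) (hcard : Nat.card G ≤ p ^ n) : Nat.card G ∣ p ^ n := by
  obtain ⟨k, hk⟩ := IsPGroup.iff_card.mp hG
  rw [hk] at hcard ⊢
  exact pow_dvd_pow p ((Nat.pow_le_pow_iff_right (Fact.out : p.Prime).one_lt).mp hcard)

section PairWithCentralSquare

variable {G : Type*} [Group G] {g h : G}

theorem commute_left_mul_sq (hgh : (g * h) ^ 2 = (h * g) ^ 2) : Commute g ((g * h) ^ 2) :=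
  calc g * (g * h) ^ 2 = g * (h * g) ^ 2 := by rw [hgh]
    _ = (g * h) ^ 2 * g := by simp only [sq, mul_assoc]

theorem commute_right_mul_sq (hgh : (g * h) ^ 2 = (h * g) ^ 2) : Commute h ((g * h) ^ 2) :=
  calc h * (g * h) ^ 2 = (h * g) ^ 2 * h := by simp only [sq, mul_assoc]
    _ = (g * h) ^ 2 * h := by rw [hgh]

theorem conj_eq_pow_three_mul_mul_sq (hg : g ^ 4 = 1) (hh : h ^ 2 = 1) :
    h * g * h⁻¹ = g ^ 3 * (g * h) ^ 2 := by
  have hg_inv : g⁻¹ = g ^ 3 := inv_eq_of_mul_eq_one_right (by rw [← pow_succ', hg])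
  have hh_inv : h⁻¹ = h := inv_eq_of_mul_eq_one_right (by rw [← sq, hh])
  calc h * g * h⁻¹ = g⁻¹ * (g * h) ^ 2 * h⁻¹ * h⁻¹ := by simp only [sq]; group
    _ = g ^ 3 * (g * h) ^ 2 := by rw [← hg_inv, mul_assoc _ h⁻¹, hh_inv, ← sq, hh, mul_one]

theorem mul_pow_eq_pow_mul_mul_sq_pow_mul (hg : g ^ 4 = 1) (hh : h ^ 2 = 1)
    (hgh : (g * h) ^ 2 = (h * g) ^ 2) (n : ℕ) :
    h * g ^ n = g ^ (3 * n) * ((g * h) ^ 2) ^ n * h := by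
  calc h * g ^ n = (h * g * h⁻¹) ^ n * h := by rw [conj_pow]; group
    _ = g ^ (3 * n) * ((g * h) ^ 2) ^ n * h := by
      rw [conj_eq_pow_three_mul_mul_sq hg hh, ((commute_left_mul_sq hgh).pow_left 3).mul_pow,
        pow_mul]

theorem exists_eq_pow_mul_sq_pow_mul_pow_of_mem_closure (hg : g ^ 4 = 1) (hh : h ^ 2 = 1)
    (hgh : (g * h) ^ 2 = (h * g) ^ 2) {x : G} (hx : x ∈ Subgroup.closure {g, h}) :
    ∃ i e b : ℕ, x = g ^ i * ((g * h) ^ 2) ^ e * h ^ b := by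
  have left_g : ∀ k y, (∃ i e b : ℕ, y = g ^ i * ((g * h) ^ 2) ^ e * h ^ b) →
      ∃ i e b : ℕ, g ^ k * y = g ^ i * ((g * h) ^ 2) ^ e * h ^ b := by
    rintro k _ ⟨i, e, b, rfl⟩
    exact ⟨k + i, e, b, by simp only [pow_add, mul_assoc]⟩
  have left_h : ∀ y, (∃ i e b : ℕ, y = g ^ i * ((g * h) ^ 2) ^ e * h ^ b) →
      ∃ i e b : ℕ, h * y = g ^ i * ((g * h) ^ 2) ^ e * h ^ b := by
    rintro _ ⟨i, e, b, rfl⟩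
    refine ⟨3 * i, i + e, b + 1, ?_⟩
    rw [← mul_assoc, ← mul_assoc, mul_pow_eq_pow_mul_mul_sq_pow_mul hg hh hgh,
      mul_assoc _ h, ((commute_right_mul_sq hgh).pow_right e).eq]
    simp only [pow_add, pow_succ', mul_assoc]
  induction hx using Subgroup.closure_induction_left with
  | one => exact ⟨0, 0, 0, by simp⟩
  | mul_left x hx y _ hy =>
    rcases hx with rfl | rfl
    · simpa using left_g 1 y hy
    · exact left_h y hy
  | inv_mul_cancel x hx y _ hy =>
    rcases hx with rfl | rfl
    · rw [inv_eq_of_mul_eq_one_right (by rw [← pow_succ', hg] : x * x ^ 3 = 1)]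
      exact left_g 3 y hy
    · rw [inv_eq_of_mul_eq_one_right (by rw [← sq, hh] : x * x = 1)]
      exact left_h y hy

theorem closure_pair_subset_range (hg : g ^ 4 = 1) (hh : h ^ 2 = 1) (hz : ((g * h) ^ 2) ^ 2 = 1)
    (hgh : (g * h) ^ 2 = (h * g) ^ 2) :
    (Subgroup.closure {g, h} : Set G) ⊆ Set.range fun p : Fin 4 × Fin 2 × Fin 2 ↦
      g ^ (p.1 : ℕ) * ((g * h) ^ 2) ^ (p.2.1 : ℕ) * h ^ (p.2.2 : ℕ) := by
  intro x hx
  obtain ⟨i, e, b, rfl⟩ := exists_eq_pow_mul_sq_pow_mul_pow_of_mem_closure hg hh hgh hx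
  exact ⟨(⟨i % 4, by omega⟩, ⟨e % 2, by omega⟩, ⟨b % 2, by omega⟩), by
    simp only [← pow_eq_pow_mod _ hg, ← pow_eq_pow_mod _ hz, ← pow_eq_pow_mod _ hh]⟩

end PairWithCentralSquare

theorem subgroup_order_dvd_sixteen_general {G : Type*} [Group G]
    (hexp : ∀ x : G, x ^ 4 = 1) (g h : G)
    (hg : g ^ 4 = 1) (hh : h ^ 2 = 1)
    (hgh4 : (g * h) ^ 4 = 1)
    (hgh2 : (g * h) ^ 2 = (h * g) ^ 2) :
    Nat.card (Subgroup.closure {g, h}) ∣ 16 := by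
  have hz : ((g * h) ^ 2) ^ 2 = 1 := by rw [← pow_mul, hgh4]
  have hsub := closure_pair_subset_range hg hh hz hgh2
  have : Finite (Subgroup.closure {g, h}) := (Set.finite_range _).subset hsub
  have h2 : IsPGroup 2 G := fun x ↦ ⟨2, hexp x⟩
  refine (h2.to_subgroup _).card_dvd_of_card_le (n := 4) ?_
  calc Nat.card (Subgroup.closure {g, h}) ≤ Nat.card (Set.range _) :=
        Nat.card_mono (Set.finite_range _) hsub
    _ ≤ Nat.card (Fin 4 × Fin 2 × Fin 2) := Finite.card_range_le _
    _ = 2 ^ 4 := by simp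

/-- In a group of exponent dividing 4, if g⁴ = 1, h² = 1, (h, g²) = 1,
(gh)⁴ = 1 and (gh)² = (hg)² ≠ 1, then ⟨g, h⟩ has order dividing 16. -/
theorem subgroup_order_dvd_sixteen {G : Type*} [Group G]
    (hexp : ∀ x : G, x ^ 4 = 1) (g h : G)
    (hg : g ^ 4 = 1) (hh : h ^ 2 = 1)
    (hcomm : h⁻¹ * (g ^ 2)⁻¹ * h * g ^ 2 = 1)
    (hgh4 : (g * h) ^ 4 = 1)
    (hgh2 : (g * h) ^ 2 = (h * g) ^ 2)
    (hne : (g * h) ^ 2 ≠ 1) :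
    Nat.card (Subgroup.closure {g, h}) ∣ 16 :=
  subgroup_order_dvd_sixteen_general hexp g h hg hh hgh4 hgh2
end

section
/- Let F be a field of characteristic 2 and G a finite 2-group such that the Frattini subgroup Φ(G) is central elementary abelian, G' ⊆ Φ(G), and |G'| ≤ 4. Then every normalized unit u of FG (unit with augmentation 1) satisfies u⁴ = 1. -/
/-- The augmentation map of a group algebra: the algebra homomorphism
FG → F sending every group element to 1. -/
noncomputable def augmentation (F G : Type*) [Field F] [Group G] :
    MonoidAlgebra F G →ₐ[F] F :=
  MonoidAlgebra.lift F F G 1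

/-!
In characteristic 2, squaring is additive modulo anticommutators `xy + yx`, and these lie in the
ideal `I = ω(G')·FG`. Since every square `g²` lies in the central elementary abelian group `Φ(G)`,
this gives `u² = y + z` with `y ∈ I` and `z = ∑ a_g² g²` central, `z² = ε(u)⁴ = 1`. As `G'` is
central of order at most 4, `ω(G')³ = 0`; the anticommutator of two generators `g(1 + a)`,
`h(1 + b)` of `I` is `gh(1 + [h⁻¹, g⁻¹])(1 + a)(1 + b) = 0`, so elements of `I` anticommute and
square to zero. Hence `u⁴ = y² + z² = 1`.
-/

open Subgroup MonoidAlgebra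
open scoped commutatorElement

namespace IsPGroup

variable {p : ℕ} [Fact p.Prime] {G : Type*} [Group G] [Finite G]

theorem card_quotient_eq_of_isCoatom (hG : IsPGroup p G) {M : Subgroup G} [M.Normal]
    (hM : IsCoatom M) : Nat.card (G ⧸ M) = p := by
  let e : Subgroup (G ⧸ M) ≃o Set.Ici M := QuotientGroup.comapMk'OrderIso M
  have := Set.isSimpleOrder_Ici_iff_isCoatom.mpr hM
  have : IsSimpleOrder (Subgroup (G ⧸ M)) := e.isSimpleOrder_iff.mpr this
  have : Nontrivial (G ⧸ M) := Subgroup.nontrivial_iff.mp inferInstance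
  obtain ⟨y, hy⟩ := exists_prime_orderOf_dvd_card' p
    ((hG.to_quotient M).card_eq_or_dvd.resolve_left Finite.one_lt_card.ne')
  have hy₁ : y ≠ 1 := fun h => (Fact.out : p.Prime).ne_one (by rw [← hy, h, orderOf_one])
  have htop : zpowers y = ⊤ :=
    (eq_bot_or_eq_top (zpowers y)).resolve_left (zpowers_ne_bot.mpr hy₁)
  rw [← hy, ← Nat.card_zpowers, htop, card_top]

theorem pow_mem_frattini (hG : IsPGroup p G) (g : G) : g ^ p ∈ frattini G := by
  have := hG.isNilpotent
  refine mem_iInf.mpr fun M => mem_iInf.mpr fun hM => ?_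
  have : M.Normal := Group.normalizerCondition_of_isNilpotent.normal_of_coatom M hM
  rw [← QuotientGroup.eq_one_iff, QuotientGroup.mk_pow, ← hG.card_quotient_eq_of_isCoatom hM]
  exact pow_card_eq_one'

end IsPGroup

theorem Subgroup.eq_one_or_eq_or_eq_or_eq_mul {G : Type*} [Group G] [Finite G] {H : Subgroup G}
    (hH : Nat.card H ≤ 4) {a b c : G} (ha : a ∈ H) (hb : b ∈ H) (hc : c ∈ H)
    (ha₁ : a ≠ 1) (hb₁ : b ≠ 1) (hab : a ≠ b) (ha₂ : a ^ 2 = 1) :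
    c = 1 ∨ c = a ∨ c = b ∨ c = a * b := by
  classical
  have hab₁ : a * b ≠ 1 := fun h => hab <|
    (inv_eq_of_mul_eq_one_right (by rwa [sq] at ha₂)).symm.trans (inv_eq_of_mul_eq_one_right h)
  have hcard : (({1, a, b, a * b} : Finset G) : Set G).ncard = 4 := by
    rw [Set.ncard_coe_finset]
    exact Finset.card_eq_four.mpr ⟨1, a, b, a * b, ha₁.symm, hb₁.symm, hab₁.symm, hab,
      fun h => hb₁ (by simpa using h), fun h => ha₁ (by simpa using h), rfl⟩
  have hsub : (({1, a, b, a * b} : Finset G) : Set G) ⊆ H := by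
    simp [Set.insert_subset_iff, one_mem, ha, hb, mul_mem ha hb]
  have hH : (({1, a, b, a * b} : Finset G) : Set G) = H :=
    Set.eq_of_subset_of_ncard_le hsub (by rwa [hcard, ← Nat.card_coe_set_eq]) (Set.toFinite _)
  have hc : c ∈ (({1, a, b, a * b} : Finset G) : Set G) := hH ▸ hc
  simpa using hc

theorem add_self_eq_zero_of_two_eq_zero {k M : Type*} [Semiring k] [AddCommMonoid M] [Module k M]
    (hk : (2 : k) = 0) (x : M) : x + x = 0 := by
  rw [← two_smul k x, hk, zero_smul]

theorem add_mul_self_of_commute {k A : Type*} [Semiring k] [Semiring A] [Module k A]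
    (hk : (2 : k) = 0) {x y : A} (h : Commute x y) : (x + y) * (x + y) = x * x + y * y := by
  calc (x + y) * (x + y) = x * x + y * y + (x * y + x * y) := by
        rw [mul_add, add_mul, add_mul, h.eq]; abel
    _ = x * x + y * y := by rw [add_self_eq_zero_of_two_eq_zero hk, add_zero]

theorem augmentation_of {F G : Type*} [Field F] [Group G] (g : G) :
    augmentation F G (of F G g) = 1 :=
  lift_of _ g

namespace MonoidAlgebra

variable {k G : Type*} [CommSemiring k] [Group G]

theorem of_mul_of_add_of_mul_of (g h : G) :
    of k G g * of k G h + of k G h * of k G g =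
      of k G (g * h) * (1 + of k G ⁅h⁻¹, g⁻¹⁆) := by
  rw [mul_add, mul_one, ← map_mul, ← map_mul, ← map_mul, commutatorElement_def]
  congr 2
  group

theorem commute_one_add_of {a : G} (ha : a ∈ center G) (x : MonoidAlgebra k G) :
    Commute (1 + of k G a) x :=
  (Commute.one_left x).add_left (of_commute (fun g => (mem_center_iff.mp ha g).symm) x)

theorem one_add_of_mul_self (hk : (2 : k) = 0) {a : G} (ha : a ^ 2 = 1) :
    (1 + of k G a) * (1 + of k G a) = 0 := by
  rw [add_mul_self_of_commute hk (Commute.one_left _), one_mul, ← map_mul, ← sq, ha, map_one,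
    add_self_eq_zero_of_two_eq_zero hk]

theorem one_add_of_mul (hk : (2 : k) = 0) (a b : G) :
    1 + of k G (a * b) = (1 + of k G a) * (1 + of k G b) + (1 + of k G a) + (1 + of k G b) := by
  calc 1 + of k G (a * b)
        = (1 + of k G (a * b)) + (1 + 1) + (of k G a + of k G a) + (of k G b + of k G b) := by
        simp only [add_self_eq_zero_of_two_eq_zero hk, add_zero]
    _ = _ := by rw [map_mul, mul_add, add_mul, add_mul, one_mul, mul_one, one_mul]; abel

theorem one_add_of_mul_one_add_of_mul_one_add_of_eq_zero (hk : (2 : k) = 0) [Finite G]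
    {H : Subgroup G} (hH₂ : ∀ x ∈ H, x ^ 2 = 1) (hH₄ : Nat.card H ≤ 4)
    {a b c : G} (ha : a ∈ H) (hb : b ∈ H) (hc : c ∈ H) :
    (1 + of k G a) * (1 + of k G b) * (1 + of k G c) = 0 := by
  have hX₁ : (1 : MonoidAlgebra k G) + of k G 1 = 0 := by
    rw [map_one, add_self_eq_zero_of_two_eq_zero hk]
  have hXX : ∀ x ∈ H, (1 + of k G x) * (1 + of k G x) = 0 := fun x hx =>
    one_add_of_mul_self hk (hH₂ x hx)
  have hinv : ∀ x ∈ H, x⁻¹ = x := fun x hx =>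
    inv_eq_of_mul_eq_one_right (by rw [← sq, hH₂ x hx])
  have hab_comm : a * b = b * a := by
    rw [← hinv _ (mul_mem ha hb), mul_inv_rev, hinv a ha, hinv b hb]
  have hcomm : Commute (1 + of k G a) (1 + of k G b) :=
    (Commute.one_right _).add_right <| (Commute.one_left _).add_left <| by
      rw [Commute, SemiconjBy, ← map_mul, ← map_mul, hab_comm]
  have hXaXbXa : (1 + of k G a) * (1 + of k G b) * (1 + of k G a) = 0 := by
    rw [hcomm.symm.right_comm, hXX a ha, zero_mul]
  have hXaXbXb : (1 + of k G a) * (1 + of k G b) * (1 + of k G b) = 0 := by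
    rw [mul_assoc, hXX b hb, mul_zero]
  by_cases ha₁ : a = 1
  · rw [ha₁, hX₁, zero_mul, zero_mul]
  by_cases hb₁ : b = 1
  · rw [hb₁, hX₁, mul_zero, zero_mul]
  by_cases hab : a = b
  · rw [hab, hXX b hb, zero_mul]
  rcases eq_one_or_eq_or_eq_or_eq_mul hH₄ ha hb hc ha₁ hb₁ hab (hH₂ a ha) with
    rfl | rfl | rfl | rfl
  · rw [hX₁, mul_zero]
  · exact hXaXbXa
  · exact hXaXbXb
  · rw [one_add_of_mul hk, mul_add, mul_add, hXaXbXa, hXaXbXb, ← mul_assoc, hXaXbXa, zero_mul,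
      add_zero, add_zero]

variable (k G) in
/-- The ideal `ω(G')·kG`; in characteristic 2 its generators `g(c - 1)` are `g(1 + c)`. -/
noncomputable def commutatorAugmentation : Submodule k (MonoidAlgebra k G) :=
  Submodule.span k {x | ∃ g, ∃ c ∈ commutator G, x = of k G g * (1 + of k G c)}

theorem mul_add_mul_mem_commutatorAugmentation (x y : MonoidAlgebra k G) :
    x * y + y * x ∈ commutatorAugmentation k G := by
  induction x using MonoidAlgebra.induction_on with
  | of g =>
    induction y using MonoidAlgebra.induction_on with
    | of h =>
      rw [of_mul_of_add_of_mul_of]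
      exact Submodule.subset_span
        ⟨g * h, _, commutator_mem_commutator (mem_top _) (mem_top _), rfl⟩
    | add y₁ y₂ h₁ h₂ =>
      simpa only [mul_add, add_mul, add_add_add_comm] using add_mem h₁ h₂
    | smul r y h =>
      simpa only [mul_smul_comm, smul_mul_assoc, smul_add] using Submodule.smul_mem _ r h
  | add x₁ x₂ h₁ h₂ =>
    simpa only [mul_add, add_mul, add_add_add_comm] using add_mem h₁ h₂
  | smul r x h =>
    simpa only [mul_smul_comm, smul_mul_assoc, smul_add] using Submodule.smul_mem _ r h

theorem of_mul_one_add_of_anticommute (hcc : commutator G ≤ center G)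
    (h₃ : ∀ a ∈ commutator G, ∀ b ∈ commutator G, ∀ c ∈ commutator G,
      (1 + of k G a) * (1 + of k G b) * (1 + of k G c) = 0)
    {g h a b : G} (ha : a ∈ commutator G) (hb : b ∈ commutator G) :
    of k G g * (1 + of k G a) * (of k G h * (1 + of k G b)) +
      of k G h * (1 + of k G b) * (of k G g * (1 + of k G a)) = 0 := by
  have hX := commute_one_add_of (k := k) (hcc ha)
  have hY := commute_one_add_of (k := k) (hcc hb)
  rw [(hX _).mul_mul_mul_comm, (hY _).mul_mul_mul_comm, (hY _).eq, ← add_mul,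
    of_mul_of_add_of_mul_of, mul_assoc, ← mul_assoc (1 + _),
    h₃ _ (commutator_mem_commutator (mem_top _) (mem_top _)) _ ha _ hb, mul_zero]

theorem mul_add_mul_eq_zero_of_mem (hcc : commutator G ≤ center G)
    (h₃ : ∀ a ∈ commutator G, ∀ b ∈ commutator G, ∀ c ∈ commutator G,
      (1 + of k G a) * (1 + of k G b) * (1 + of k G c) = 0)
    {x y : MonoidAlgebra k G}
    (hx : x ∈ commutatorAugmentation k G) (hy : y ∈ commutatorAugmentation k G) :
    x * y + y * x = 0 := by
  -- `xy + yx` is bilinear, so it suffices to check it on generators.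
  let B := LinearMap.mul k (MonoidAlgebra k G) + (LinearMap.mul k (MonoidAlgebra k G)).flip
  have hB :
      Submodule.map₂ B (commutatorAugmentation k G) (commutatorAugmentation k G) ≤ ⊥ := by
    rw [commutatorAugmentation, Submodule.map₂_span_span, Submodule.span_le]
    rintro _ ⟨_, ⟨g, a, ha, rfl⟩, _, ⟨h, b, hb, rfl⟩, rfl⟩
    exact of_mul_one_add_of_anticommute hcc h₃ ha hb
  exact Submodule.map₂_le.mp hB x hx y hy

theorem mul_self_eq_zero_of_mem (hk : (2 : k) = 0) (hcc : commutator G ≤ center G)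
    (h₃ : ∀ a ∈ commutator G, ∀ b ∈ commutator G, ∀ c ∈ commutator G,
      (1 + of k G a) * (1 + of k G b) * (1 + of k G c) = 0)
    (hG'₂ : ∀ c ∈ commutator G, c ^ 2 = 1)
    {x : MonoidAlgebra k G} (hx : x ∈ commutatorAugmentation k G) : x * x = 0 := by
  induction hx using Submodule.span_induction with
  | mem _ hx =>
    obtain ⟨g, a, ha, rfl⟩ := hx
    rw [(commute_one_add_of (hcc ha) _).mul_mul_mul_comm, one_add_of_mul_self hk (hG'₂ a ha),
      mul_zero]
  | zero => exact mul_zero 0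
  | add x y hx hy hxx hyy =>
    rw [mul_add, add_mul, add_mul, hxx, hyy, zero_add, add_zero,
      mul_add_mul_eq_zero_of_mem hcc h₃ hy hx]
  | smul r x _ hxx => rw [smul_mul_smul, hxx, smul_zero]

theorem exists_mul_self_add_mem_commutatorAugmentation {F : Type*} [Field F] (hF : (2 : F) = 0)
    (hG₂ : ∀ g : G, g ^ 2 ∈ center G) (hG₄ : ∀ g : G, g ^ 4 = 1) (x : MonoidAlgebra F G) :
    ∃ z ∈ Subalgebra.center F (MonoidAlgebra F G),
      z * z = algebraMap F _ (augmentation F G x ^ 4) ∧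
      x * x + z ∈ commutatorAugmentation F G := by
  induction x using MonoidAlgebra.induction_on with
  | of g =>
    refine ⟨of F G (g ^ 2), Subalgebra.mem_center_iff.mpr fun w => ?_, ?_, ?_⟩
    · exact (of_commute (fun h => (mem_center_iff.mp (hG₂ g) h).symm) w).eq.symm
    · rw [← map_mul, ← pow_add, hG₄, map_one, augmentation_of, one_pow, map_one]
    · rw [map_pow, sq, add_self_eq_zero_of_two_eq_zero hF]
      exact zero_mem _
  | add x y hx hy =>
    obtain ⟨z, hz, hzz, hxz⟩ := hx
    obtain ⟨w, hw, hww, hyw⟩ := hy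
    refine ⟨z + w, add_mem hz hw, ?_, ?_⟩
    · have hfrob : ∀ s t : F, (s + t) ^ 4 = s ^ 4 + t ^ 4 := fun s t => by
        linear_combination (2 * s ^ 3 * t + 3 * s ^ 2 * t ^ 2 + 2 * s * t ^ 3) * hF
      rw [add_mul_self_of_commute hF (Subalgebra.mem_center_iff.mp hw z), hzz, hww, map_add,
        hfrob, map_add]
    · have hsplit :
          (x + y) * (x + y) + (z + w) = (x * x + z) + (y * y + w) + (x * y + y * x) := by
        rw [mul_add, add_mul, add_mul]; abel
      rw [hsplit]
      exact add_mem (add_mem hxz hyw) (mul_add_mul_mem_commutatorAugmentation x y)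
  | smul r x hx =>
    obtain ⟨z, hz, hzz, hxz⟩ := hx
    refine ⟨(r * r) • z, Subalgebra.smul_mem _ hz _, ?_, ?_⟩
    · rw [smul_mul_smul, hzz, map_smul, smul_eq_mul, Algebra.smul_def, ← map_mul]
      congr 1
      ring
    · rw [smul_mul_smul, ← smul_add]
      exact Submodule.smul_mem _ _ hxz

end MonoidAlgebra

/-- Let char F = 2 and G a finite 2-group with Φ(G) central elementary abelian,
G' ⊆ Φ(G), and |G'| ≤ 4. Then every normalized unit u of FG satisfies u⁴ = 1. -/
theorem normalized_units_exponent_four {F : Type*} [Field F] (hF : (2 : F) = 0)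
    {G : Type*} [Group G] [Finite G] (hp : IsPGroup 2 G)
    (hfc : frattini G ≤ Subgroup.center G)
    (hfe : ∀ x ∈ frattini G, x ^ 2 = 1)
    (hG' : commutator G ≤ frattini G)
    (hcard : Nat.card (commutator G) ≤ 4) :
    ∀ u : MonoidAlgebra F G, IsUnit u → augmentation F G u = 1 → u ^ 4 = 1 := by
  intro u _ hu
  have hG'c : commutator G ≤ center G := hG'.trans hfc
  have hG'₂ : ∀ c ∈ commutator G, c ^ 2 = 1 := fun c hc => hfe c (hG' hc)
  have hsq : ∀ g : G, g ^ 2 ∈ frattini G := hp.pow_mem_frattini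
  obtain ⟨z, hz, hzz, hy⟩ := exists_mul_self_add_mem_commutatorAugmentation hF
    (fun g => hfc (hsq g)) (fun g => by rw [show 4 = 2 * 2 from rfl, pow_mul, hfe _ (hsq g)]) u
  have hyy := mul_self_eq_zero_of_mem hF hG'c
    (fun _ ha _ hb _ hc =>
      one_add_of_mul_one_add_of_mul_one_add_of_eq_zero hF hG'₂ hcard ha hb hc)
    hG'₂ hy
  calc u ^ 4 = (u * u + z + z) * (u * u + z + z) := by
        rw [add_assoc, add_self_eq_zero_of_two_eq_zero hF, add_zero, ← sq, ← sq, ← pow_mul]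
    _ = 1 := by
        rw [add_mul_self_of_commute hF (Subalgebra.mem_center_iff.mp hz _), hyy, hzz, hu, one_pow,
          map_one, zero_add]
end
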